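/- arXiv:2401.17470 — 2 statements merged into one kernel-verified Lean document; each statement's English description precedes it below -/
import Mathlib

section
/- Let M be a matroid on a finite linearly ordered ground set E. Every independent set I of M can be uniquely written as I = B \ Y for a basis B and a subset Y ⊆ IA(B). Equivalently, the intervals [B \ IA(B), B], as B ranges over the bases of M, partition the independence complex of M. -/
/-!
An element `i` of a base `B` is internally active exactly when its fundamental cocircuit lies
below `i`, i.e. when every exchange `insert e (B \ {i})` that is again a base has `e < i`.
Given `I`, the colex-largest base `B ⊇ I` has all of `B \ I` active: an exchange of some
`e ∈ B \ I` for a larger element would give a colex-larger base still containing `I`.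
If two bases `B, B' ⊇ I` both have this property, the least element of `B ∆ B'` lies in, say,
`B \ I`; it is active, so exchanging it into `B'` yields a smaller element of `B' \ B`.
-/

open Set

variable {α : Type*}

/-- A circuit of a matroid: a minimal dependent set. -/
def Matroid.Cct (M : Matroid α) (C : Set α) : Prop :=
  M.Dep C ∧ ∀ D ⊂ C, ¬ M.Dep D

/-- The externally active elements with respect to `S`: elements `e ∈ E \ S` that are the
maximum of some circuit contained in `S ∪ {e}`. -/
def Matroid.exA [LinearOrder α] (M : Matroid α) (S : Set α) : Set α :=
  {e | e ∈ M.E \ S ∧ ∃ C, M.Cct C ∧ C ⊆ insert e S ∧ ∀ f ∈ C, f ≤ e}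

/-- The externally passive elements with respect to `S`. -/
def Matroid.exP [LinearOrder α] (M : Matroid α) (S : Set α) : Set α :=
  (M.E \ S) \ M.exA S

/-- The internally active elements with respect to `S`: elements of `S` that are externally
active with respect to `E \ S` in the dual matroid. -/
def Matroid.inA [LinearOrder α] (M : Matroid α) (S : Set α) : Set α :=
  {i | i ∈ S ∧ i ∈ M✶.exA (M.E \ S)}

/-- The internally passive elements with respect to `S`. -/
def Matroid.inP [LinearOrder α] (M : Matroid α) (S : Set α) : Set α :=
  S \ M.inA S

/-- `I` is internally related to the basis `B` if `I = B \ Y` for some `Y ⊆ IA(B)`. -/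
def Matroid.IntRelated [LinearOrder α] (M : Matroid α) (I B : Set α) : Prop :=
  M.IsBase B ∧ ∃ Y ⊆ M.inA B, I = B \ Y

/-- The external/internal order on independent sets. -/
def Matroid.extIntLE [LinearOrder α] (M : Matroid α) (I J : Set α) : Prop :=
  ((∃ B, M.IntRelated I B ∧ M.IntRelated J B) ∧ I ⊆ J) ∨
  ((¬ ∃ B, M.IntRelated I B ∧ M.IntRelated J B) ∧
    (I \ M.inA I) ∪ M.exA I ⊆ (J \ M.inA J) ∪ M.exA J)

namespace Matroid

variable {M : Matroid α} {B B' I : Set α} {e i : α}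

lemma cct_iff_isCircuit {C : Set α} : M.Cct C ↔ M.IsCircuit C :=
  minimal_iff_forall_ssubset.symm

lemma IsBase.mem_fundCocircuit_iff_isBase_exchange (hB : M.IsBase B) (hi : i ∈ B) (he : e ∉ B) :
    e ∈ M.fundCocircuit i B ↔ M.IsBase (insert e (B \ {i})) := by
  have hei : e ≠ i := (ne_of_mem_of_not_mem hi he).symm
  by_cases heE : e ∈ M.E
  · rw [hB.mem_fundCocircuit_iff_mem_fundCircuit,
      hB.indep.mem_fundCircuit_iff (by rwa [hB.closure_eq]) he, ← insert_sdiff_singleton_comm hei]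
    exact ⟨hB.exchange_isBase_of_indep he, IsBase.indep⟩
  · refine iff_of_false (fun h => heE ?_) (fun h => heE (h.subset_ground (mem_insert e _)))
    exact ((M.fundCocircuit_subset_insert_compl i B h).resolve_left hei).1

variable [LinearOrder α]

lemma IsBase.mem_inA_iff_forall_mem_fundCocircuit_le (hB : M.IsBase B) :
    i ∈ M.inA B ↔ i ∈ B ∧ ∀ e ∈ M.fundCocircuit i B, e ≤ i := by
  constructor
  · rintro ⟨hi, -, C, hC, hCs, hCle⟩
    rw [(cct_iff_isCircuit.1 hC).eq_fundCircuit_of_subset hB.compl_isBase_dual.indep hCs] at hCle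
    exact ⟨hi, hCle⟩
  · rintro ⟨hi, hle⟩
    exact ⟨hi, ⟨hB.subset_ground hi, fun h => h.2 hi⟩, M.fundCocircuit i B,
      cct_iff_isCircuit.2 (fundCocircuit_isCocircuit hi hB),
      M.fundCocircuit_subset_insert_compl i B, hle⟩

lemma IsBase.mem_inA_iff (hB : M.IsBase B) :
    i ∈ M.inA B ↔ i ∈ B ∧ ∀ e ∉ B, M.IsBase (insert e (B \ {i})) → e < i := by
  rw [hB.mem_inA_iff_forall_mem_fundCocircuit_le]
  refine and_congr_right fun hi => ⟨fun h e he heB => ?_, fun h e he => ?_⟩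
  · exact (h e ((hB.mem_fundCocircuit_iff_isBase_exchange hi he).2 heB)).lt_of_ne
      (ne_of_mem_of_not_mem hi he).symm
  · obtain rfl | hei := eq_or_ne e i
    · rfl
    have heB : e ∉ B := fun heB => hei <| by
      rw [← mem_singleton_iff, ← M.fundCocircuit_inter_eq hi]
      exact ⟨he, heB⟩
    exact (h e heB ((hB.mem_fundCocircuit_iff_isBase_exchange hi heB).1 he)).le

lemma IsBase.exists_mem_sdiff_lt_of_mem_inA (hB : M.IsBase B) (hB' : M.IsBase B')
    (he : e ∈ B \ B') (heA : e ∈ M.inA B) : ∃ f ∈ B' \ B, f < e := by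
  obtain ⟨f, hf, hfB⟩ := hB.exchange hB' he
  exact ⟨f, hf, (hB.mem_inA_iff.1 heA).2 f hf.2 hfB⟩

lemma IsBase.eq_of_sdiff_subset_inA [M.Finite] (hB : M.IsBase B) (hB' : M.IsBase B')
    (hIB : I ⊆ B) (hIB' : I ⊆ B') (hA : B \ I ⊆ M.inA B) (hA' : B' \ I ⊆ M.inA B') :
    B = B' := by
  by_contra hne
  have hfin : (symmDiff B B').Finite := M.ground_finite.subset
    (symmDiff_subset_union.trans (union_subset hB.subset_ground hB'.subset_ground))
  obtain ⟨e, he⟩ := hfin.exists_minimal (symmDiff_nonempty.2 hne)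
  rcases he.prop with he' | he'
  · obtain ⟨f, hf, hfe⟩ := hB.exists_mem_sdiff_lt_of_mem_inA hB' he'
      (hA ⟨he'.1, fun h => he'.2 (hIB' h)⟩)
    exact he.not_lt (Or.inr hf) hfe
  · obtain ⟨f, hf, hfe⟩ := hB'.exists_mem_sdiff_lt_of_mem_inA hB he'
      (hA' ⟨he'.1, fun h => he'.2 (hIB h)⟩)
    exact he.not_lt (Or.inl hf) hfe

lemma Indep.exists_isBase_sdiff_subset_inA [M.Finite] (hI : M.Indep I) :
    ∃ B, M.IsBase B ∧ I ⊆ B ∧ B \ I ⊆ M.inA B := by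
  classical
  obtain ⟨B₀, hB₀, hIB₀⟩ := hI.exists_isBase_superset
  obtain ⟨B, hB, hmax⟩ := (M.ground_finite.toFinset.powerset.filter
    fun B : Finset α => M.IsBase B ∧ I ⊆ B).exists_max_image toColex
    ⟨(M.ground_finite.subset hB₀.subset_ground).toFinset,
      by simp [hB₀, hIB₀, hB₀.subset_ground]⟩
  simp only [Finset.mem_filter, Finset.mem_powerset] at hB hmax
  obtain ⟨-, hB, hIB⟩ := hB
  refine ⟨B, hB, hIB, fun e he => hB.mem_inA_iff.2 ⟨he.1, fun f hfB hf => ?_⟩⟩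
  by_contra! hef
  have hB' : M.IsBase ↑(insert f (B.erase e)) := by simpa
  have hIB' : I ⊆ ↑(insert f (B.erase e)) := by
    simpa using (subset_sdiff_singleton hIB he.2).trans (subset_insert f _)
  refine (hmax _ ⟨by simpa using hB'.subset_ground, hB', hIB'⟩).not_gt ?_
  have hfB' : f ∉ B.erase e := fun h => hfB (Finset.mem_of_mem_erase h)
  simpa [Finset.insert_erase (show e ∈ B from he.1)] using
    (Finset.Colex.insert_lt_insert (Finset.notMem_erase e B) hfB').2
      (hef.lt_of_ne (ne_of_mem_of_not_mem he.1 hfB))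

end Matroid

/-- Every independent set is uniquely `B \ Y` with `B` a basis and `Y ⊆ IA(B)`. -/
theorem crapo_decomposition_indep [LinearOrder α] (M : Matroid α) [M.Finite]
    (I : Set α) (hI : M.Indep I) :
    ∃! p : Set α × Set α, M.IsBase p.1 ∧ p.2 ⊆ M.inA p.1 ∧ I = p.1 \ p.2 := by
  obtain ⟨B, hB, hIB, hA⟩ := hI.exists_isBase_sdiff_subset_inA
  refine ⟨(B, B \ I), ⟨hB, hA, (sdiff_sdiff_cancel_left hIB).symm⟩, ?_⟩
  rintro ⟨B', Y⟩ ⟨hB', hY, rfl⟩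
  have hYB' : Y ⊆ B' := fun y hy => (hY hy).1
  have hY' : B' \ (B' \ Y) ⊆ M.inA B' := by rwa [sdiff_sdiff_cancel_left hYB']
  obtain rfl := hB.eq_of_sdiff_subset_inA hB' hIB sdiff_subset hA hY'
  rw [sdiff_sdiff_cancel_left hYB']
end

section
/- Let A and C be bases of a matroid M on a linearly ordered set E, and suppose B = (C \ {c}) ∪ {b} is a basis with b ≠ c, B ≤_{ext/int} C, c ∈ EP(B), and EA(C) ⊆ EA(B) ∪ {b}. Then IA(C) ⊆ IA(B). -/
open Set

variable {α : Type*}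

/-! Let `Γ` be the fundamental circuit of `c` with respect to `B`. If `c` were internally active
in `C`, with witnessing cocircuit `K`, then `Γ ∩ K ⊆ {b, c}` contains `c`, and a circuit and a
cocircuit never meet in a single element, so `b ∈ Γ ∩ K` and `b < c`. Now `b ∈ Γ` makes `b`
internally passive in `B`, while `b ∈ K` makes `b` externally passive in `C`; since `b ∉ C` this
contradicts `IP(B) ⊆ IP(C) ∪ EA(C)`. Hence `IA(C) ⊆ C \ {c} ⊆ B`, and an element of `IA(C)`
that were internally passive in `B` would lie in `IP(C) ∪ EA(C)`, which is disjoint from `IA(C)`. -/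

namespace Matroid

variable {M : Matroid α} {I J K S Γ : Set α} {e f x y : α}

lemma cct_iff_isCircuit_s16 : M.Cct S ↔ M.IsCircuit S := by
  rw [isCircuit_def, minimal_iff_forall_ssubset]
  rfl

lemma IsCircuit.mem_of_subset_insert (hΓ : M.IsCircuit Γ) (hI : M.Indep I)
    (hΓI : Γ ⊆ insert e I) : e ∈ Γ := by
  by_contra he
  exact hΓ.not_indep (hI.subset ((subset_insert_iff_of_notMem he).1 hΓI))

lemma IsCircuit.mem_of_inter_subset_pair (hΓ : M.IsCircuit Γ) (hK : M.IsCocircuit K)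
    (hΓK : Γ ∩ K ⊆ {x, y}) (hx : x ∈ Γ ∩ K) : y ∈ Γ ∩ K := by
  by_contra hy
  refine hΓ.inter_isCocircuit_ne_singleton hK (e := x) (subset_antisymm (fun z hz ↦ ?_) ?_)
  · rcases hΓK hz with rfl | rfl
    exacts [rfl, absurd hz hy]
  · exact singleton_subset_iff.2 hx

lemma insert_inter_insert_sdiff_subset_pair (E : Set α) :
    insert x S ∩ insert y (E \ S) ⊆ {x, y} := by
  rintro z ⟨rfl | hzS, rfl | ⟨-, hzS'⟩⟩
  exacts [Or.inl rfl, Or.inl rfl, Or.inr rfl, absurd hzS hzS']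

section Activity

variable [LinearOrder α]

lemma mem_exA_iff : e ∈ M.exA S ↔
    e ∈ M.E \ S ∧ ∃ Γ, M.IsCircuit Γ ∧ Γ ⊆ insert e S ∧ ∀ f ∈ Γ, f ≤ e := by
  simp only [exA, cct_iff_isCircuit_s16, mem_ofPred_eq]

lemma mem_inA_iff : e ∈ M.inA S ↔
    e ∈ S ∧ e ∈ M.E ∧ ∃ K, M.IsCocircuit K ∧ K ⊆ insert e (M.E \ S) ∧ ∀ f ∈ K, f ≤ e := by
  simp only [inA, mem_ofPred_eq, mem_exA_iff, dual_ground, mem_sdiff, not_and, not_not]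
  tauto

lemma inA_subset (M : Matroid α) (S : Set α) : M.inA S ⊆ S :=
  fun _ he ↦ he.1

lemma exA_disjoint (M : Matroid α) (S : Set α) : Disjoint (M.exA S) S :=
  disjoint_left.2 fun _ he ↦ he.1.2

lemma notMem_inA_of_mem_isCircuit_of_lt (hS : M.IsBase S) (hΓ : M.IsCircuit Γ)
    (hΓS : Γ ⊆ insert f S) (heΓ : e ∈ Γ) (hef : e < f) : e ∉ M.inA S := by
  intro he
  obtain ⟨-, -, K, hK, hKS, hKe⟩ := mem_inA_iff.1 he
  have heK : e ∈ K := hK.mem_of_subset_insert hS.compl_isBase_dual.indep hKS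
  have hfK : f ∈ Γ ∩ K := by
    refine hΓ.mem_of_inter_subset_pair hK ?_ ⟨heΓ, heK⟩
    exact pair_comm e f ▸ (inter_subset_inter hΓS hKS).trans
      (insert_inter_insert_sdiff_subset_pair M.E)
  exact (hKe f hfK.2).not_gt hef

lemma notMem_exA_of_mem_isCocircuit_of_lt (hS : M.IsBase S) (hK : M.IsCocircuit K)
    (hKS : K ⊆ insert f (M.E \ S)) (heK : e ∈ K) (hef : e < f) : e ∉ M.exA S := by
  intro he
  obtain ⟨-, Γ, hΓ, hΓS, hΓe⟩ := mem_exA_iff.1 he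
  have heΓ : e ∈ Γ := hΓ.mem_of_subset_insert hS.indep hΓS
  have hfΓ : f ∈ Γ ∩ K := hΓ.mem_of_inter_subset_pair hK
    ((inter_subset_inter hΓS hKS).trans (insert_inter_insert_sdiff_subset_pair M.E)) ⟨heΓ, heK⟩
  exact (hΓe f hfΓ.1).not_gt hef

lemma inA_inter_subset_inA_of_inP_subset (h : M.inP I ⊆ M.inP J ∪ M.exA J) :
    M.inA J ∩ I ⊆ M.inA I := by
  rintro x ⟨hxJ, hxI⟩
  by_contra hx
  rcases h ⟨hxI, hx⟩ with hxP | hxE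
  · exact hxP.2 hxJ
  · exact disjoint_left.1 (M.exA_disjoint J) hxE (M.inA_subset J hxJ)

lemma IntRelated.eq_of_isBase (h : M.IntRelated I J) (hI : M.IsBase I) : I = J := by
  obtain ⟨hJ, Y, -, rfl⟩ := h
  exact hI.eq_of_subset_isBase hJ sdiff_subset

lemma extIntLE.inP_union_exA_subset (h : M.extIntLE I J) (hI : M.IsBase I) (hJ : M.IsBase J)
    (hIJ : I ≠ J) : M.inP I ∪ M.exA I ⊆ M.inP J ∪ M.exA J := by
  rcases h with ⟨⟨D, hID, hJD⟩, -⟩ | ⟨-, h⟩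
  · exact absurd ((hID.eq_of_isBase hI).trans (hJD.eq_of_isBase hJ).symm) hIJ
  · exact h

variable {B C : Set α} {b c : α}

lemma notMem_inA_of_exchange (hB : M.IsBase B) (hC : M.IsBase C) (hbc : b ≠ c)
    (hBdef : B = insert b (C \ {c})) (hbC : b ∉ C) (hle : M.inP B ⊆ M.inP C ∪ M.exA C) :
    c ∉ M.inA C := by
  intro hc
  obtain ⟨hcC, hcE, K, hK, hKC, hKc⟩ := mem_inA_iff.1 hc
  have hcB : c ∉ B := by simp [hBdef, hbc.symm]
  have hΓ : M.IsCircuit (M.fundCircuit c B) := hB.fundCircuit_isCircuit hcE hcB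
  have hcK : c ∈ K := hK.mem_of_subset_insert hC.compl_isBase_dual.indep hKC
  have hbΓK : b ∈ M.fundCircuit c B ∩ K := by
    refine hΓ.mem_of_inter_subset_pair hK ?_ ⟨M.mem_fundCircuit c B, hcK⟩
    rintro z ⟨hzΓ, hzK⟩
    rcases hKC hzK with rfl | ⟨-, hzC⟩
    · exact mem_insert z {b}
    have hzB : z ∈ B :=
      (M.fundCircuit_subset_insert c B hzΓ).resolve_left fun h ↦ hzC (h ▸ hcC)
    rw [hBdef] at hzB
    exact mem_insert_of_mem c (hzB.resolve_right fun h ↦ hzC h.1)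
  have hbc' : b < c := (hKc b hbΓK.2).lt_of_ne hbc
  have hbIP : b ∈ M.inP B := ⟨hBdef ▸ mem_insert b _,
    notMem_inA_of_mem_isCircuit_of_lt hB hΓ (M.fundCircuit_subset_insert c B) hbΓK.1 hbc'⟩
  rcases hle hbIP with hbC' | hbEA
  · exact hbC hbC'.1
  · exact notMem_exA_of_mem_isCocircuit_of_lt hC hK hKC hbΓK.2 hbc' hbEA

end Activity

end Matroid

open Matroid in
theorem inA_subset_of_exchange_general [LinearOrder α] (M : Matroid α)
    (B C : Set α) (b c : α) (hB : M.IsBase B) (hC : M.IsBase C)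
    (hbc : b ≠ c) (hBdef : B = insert b (C \ {c}))
    (hle : M.extIntLE B C) :
    M.inA C ⊆ M.inA B := by
  obtain rfl | hBC := eq_or_ne B C
  · exact subset_rfl
  have hle' := hle.inP_union_exA_subset hB hC hBC
  have hbC : b ∉ C := fun hbC ↦
    hBC (hB.eq_of_subset_isBase hC (hBdef ▸ insert_subset hbC sdiff_subset))
  have hcIA := notMem_inA_of_exchange hB hC hbc hBdef hbC (subset_union_left.trans hle')
  intro x hx
  refine inA_inter_subset_inA_of_inP_subset (subset_union_left.trans hle') ⟨hx, ?_⟩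
  rw [hBdef]
  exact mem_insert_of_mem b ⟨hx.1, ne_of_mem_of_not_mem hx hcIA⟩

/-- If `B = (C \ {c}) ∪ {b}` is a basis below `C` in the external/internal order with
`c ∈ EP(B)` and `EA(C) ⊆ EA(B) ∪ {b}`, then `IA(C) ⊆ IA(B)`. -/
theorem inA_subset_of_exchange [LinearOrder α] (M : Matroid α) [M.Finite]
    (A B C : Set α) (b c : α) (hA : M.IsBase A) (hB : M.IsBase B) (hC : M.IsBase C)
    (hbc : b ≠ c) (hBdef : B = insert b (C \ {c}))
    (hle : M.extIntLE B C) (hcEP : c ∈ M.exP B)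
    (hEA : M.exA C ⊆ M.exA B ∪ {b}) :
    M.inA C ⊆ M.inA B :=
  inA_subset_of_exchange_general M B C b c hB hC hbc hBdef hle
end
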